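/- Let V(q, q̇) = (1/2) q̇ᵀ G(q, q̇) q̇ + Φ(q) where G is differentiable with symmetric values and Φ differentiable. Suppose (q(t), q̇(t)) satisfies (G(q,q̇) + Ξ_G(q,q̇)) q̈ + ξ_G(q,q̇) = −∇Φ(q) − B(q,q̇) q̇, where Ξ_G(q,q̇) = (1/2)Σ_i q̇_i ∂_{q̇} g_i(q,q̇) and ξ_G(q,q̇) = Ġ_q(q,q̇)q̇ − (1/2)∇_q(q̇ᵀ G q̇). Then along any solution, dV/dt = −q̇ᵀ B(q,q̇) q̇. -/

import Mathlib

open Matrix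

/-- Partial derivative of a scalar function on `ℝ^d` in the `k`-th coordinate direction. -/
noncomputable def pd {d : ℕ} (k : Fin d) (f : (Fin d → ℝ) → ℝ) (x : Fin d → ℝ) : ℝ :=
  fderiv ℝ f x (Pi.single k 1)

/-- `Ξ_G(q,q̇) = (1/2) Σ_i q̇_i ∂_{q̇} g_i(q,q̇)`. -/
noncomputable def XiMat {d : ℕ} (G : (Fin d → ℝ) → (Fin d → ℝ) → Matrix (Fin d) (Fin d) ℝ)
    (q v : Fin d → ℝ) : Matrix (Fin d) (Fin d) ℝ :=
  fun j k => (1 / 2) * ∑ i, v i * pd k (fun v' => G q v' j i) v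

/-- `ξ_G(q,q̇) = Ġ_q(q,q̇)q̇ − (1/2)∇_q(q̇ᵀ G q̇)`. -/
noncomputable def xiVec {d : ℕ} (G : (Fin d → ℝ) → (Fin d → ℝ) → Matrix (Fin d) (Fin d) ℝ)
    (q v : Fin d → ℝ) : Fin d → ℝ :=
  fun i => (∑ j, (∑ k, v k * pd k (fun q' => G q' v i j) q) * v j)
    - (1 / 2) * pd i (fun q' => v ⬝ᵥ (G q' v).mulVec v) q


/-! Along the motion, the time derivative of `G(q, q̇)` splits into the position part `Ġ_q` and a
velocity part `∂_{q̇}G · q̈`; contracted twice with `q̇`, the latter is `2 q̇ᵀ Ξ_G q̈`. With the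
symmetry of `G` this gives `dK/dt = q̇ᵀ((G + Ξ_G) q̈ + ½ Ġ_q q̇)` for `K = ½ q̇ᵀ G q̇`. Contracting
`∇_q(q̇ᵀ G q̇)` with `q̇` gives `q̇ᵀ Ġ_q q̇` again, so `q̇ᵀ ξ_G = ½ q̇ᵀ Ġ_q q̇` and the equation of
motion turns `dK/dt` into `−q̇ᵀ∇Φ − q̇ᵀ B q̇`, whose first term cancels `dΦ(q)/dt`. -/

theorem fderiv_apply_eq_sum_pd {d : ℕ} (f : (Fin d → ℝ) → ℝ) (x w : Fin d → ℝ) :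
    fderiv ℝ f x w = ∑ k, w k * pd k f x := by
  conv_lhs => rw [pi_eq_sum_univ' w]
  simp [pd]

theorem fderiv_uncurry_apply {E F H : Type*} [NormedAddCommGroup E] [NormedSpace ℝ E]
    [NormedAddCommGroup F] [NormedSpace ℝ F] [NormedAddCommGroup H] [NormedSpace ℝ H]
    {f : E → F → H} {x : E} {v : F}
    (hf : DifferentiableAt ℝ (fun p : E × F => f p.1 p.2) (x, v)) (w : E) (u : F) :
    fderiv ℝ (fun p : E × F => f p.1 p.2) (x, v) (w, u)
      = fderiv ℝ (fun y => f y v) x w + fderiv ℝ (fun z => f x z) v u := by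
  have hleft := hf.hasFDerivAt.comp x (hasFDerivAt_prodMk_left (𝕜 := ℝ) x v)
  have hright := hf.hasFDerivAt.comp v (hasFDerivAt_prodMk_right (𝕜 := ℝ) x v)
  change HasFDerivAt (fun y => f y v) _ x at hleft
  change HasFDerivAt (fun z => f x z) _ v at hright
  rw [hleft.fderiv, hright.fderiv]
  simp [← map_add]

theorem Matrix.IsSymm.dotProduct_mulVec_comm {ι : Type*} [Fintype ι] {A : Matrix ι ι ℝ}
    (hA : A.IsSymm) (v w : ι → ℝ) : v ⬝ᵥ A *ᵥ w = w ⬝ᵥ A *ᵥ v := by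
  rw [dotProduct_mulVec, ← mulVec_transpose, hA.eq, dotProduct_comm]

theorem HasDerivAt.dotProduct_mulVec {ι : Type*} [Fintype ι] {v : ℝ → ι → ℝ}
    {M : ℝ → Matrix ι ι ℝ} {v' : ι → ℝ} {M' : Matrix ι ι ℝ} {t : ℝ}
    (hv : HasDerivAt v v' t) (hM : ∀ i j, HasDerivAt (fun s => M s i j) (M' i j) t) :
    HasDerivAt (fun s => v s ⬝ᵥ M s *ᵥ v s)
      (v' ⬝ᵥ M t *ᵥ v t + v t ⬝ᵥ M' *ᵥ v t + v t ⬝ᵥ M t *ᵥ v') t := by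
  have hvi : ∀ i, HasDerivAt (fun s => v s i) (v' i) t := hasDerivAt_pi.mp hv
  have hsum := HasDerivAt.fun_sum (u := Finset.univ) fun i _ =>
    HasDerivAt.fun_sum (u := Finset.univ) fun j _ => (hvi i).fun_mul ((hM i j).fun_mul (hvi j))
  have hfun : (fun s => v s ⬝ᵥ M s *ᵥ v s) = fun s => ∑ i, ∑ j, v s i * (M s i j * v s j) := by
    ext s; simp [dotProduct, mulVec, Finset.mul_sum]
  rw [hfun]
  refine hsum.congr_deriv ?_
  simp only [dotProduct, mulVec, Finset.mul_sum, ← Finset.sum_add_distrib]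
  refine Finset.sum_congr rfl fun i _ => Finset.sum_congr rfl fun j _ => ?_
  ring

theorem fderiv_dotProduct_mulVec {E ι : Type*} [NormedAddCommGroup E] [NormedSpace ℝ E]
    [Fintype ι] {M : E → Matrix ι ι ℝ} {x : E}
    (hM : ∀ i j, DifferentiableAt ℝ (fun y => M y i j) x) (v : ι → ℝ) (w : E) :
    fderiv ℝ (fun y => v ⬝ᵥ M y *ᵥ v) x w
      = v ⬝ᵥ (of fun i j => fderiv ℝ (fun y => M y i j) x w) *ᵥ v := by
  have hsum := HasFDerivAt.fun_sum (u := Finset.univ) fun i _ =>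
    HasFDerivAt.fun_sum (u := Finset.univ) fun j _ =>
      (((hM i j).hasFDerivAt.mul_const (v j)).const_mul (v i))
  have hfun : (fun y => v ⬝ᵥ M y *ᵥ v) = fun y => ∑ i, ∑ j, v i * (M y i j * v j) := by
    ext y; simp [dotProduct, mulVec, Finset.mul_sum]
  rw [hfun, hsum.fderiv]
  simp only [dotProduct, mulVec, Finset.mul_sum, _root_.sum_apply,
    _root_.smul_apply, smul_eq_mul, of_apply]
  refine Finset.sum_congr rfl fun i _ => Finset.sum_congr rfl fun j _ => ?_
  ring

section GDS

variable {d : ℕ}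

/-- The paper's `Ġ_q(q, q̇)`. -/
noncomputable def GdotPos (G : (Fin d → ℝ) → (Fin d → ℝ) → Matrix (Fin d) (Fin d) ℝ)
    (x v : Fin d → ℝ) : Matrix (Fin d) (Fin d) ℝ :=
  of fun i j => fderiv ℝ (fun x' => G x' v i j) x v

noncomputable def GdotVel (G : (Fin d → ℝ) → (Fin d → ℝ) → Matrix (Fin d) (Fin d) ℝ)
    (x v a : Fin d → ℝ) : Matrix (Fin d) (Fin d) ℝ :=
  of fun i j => fderiv ℝ (fun v' => G x v' i j) v a

theorem dotProduct_GdotVel_mulVec (G : (Fin d → ℝ) → (Fin d → ℝ) → Matrix (Fin d) (Fin d) ℝ)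
    (x v a : Fin d → ℝ) : v ⬝ᵥ GdotVel G x v a *ᵥ v = 2 * (v ⬝ᵥ XiMat G x v *ᵥ a) := by
  simp only [GdotVel, XiMat, dotProduct, mulVec, of_apply, fderiv_apply_eq_sum_pd,
    Finset.mul_sum, Finset.sum_mul]
  refine Finset.sum_congr rfl fun i _ => ?_
  rw [Finset.sum_comm]
  refine Finset.sum_congr rfl fun k _ => Finset.sum_congr rfl fun j _ => ?_
  ring

theorem dotProduct_xiVec {G : (Fin d → ℝ) → (Fin d → ℝ) → Matrix (Fin d) (Fin d) ℝ}
    {x v : Fin d → ℝ} (hG : ∀ i j, DifferentiableAt ℝ (fun x' => G x' v i j) x) :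
    v ⬝ᵥ xiVec G x v = (1 / 2) * (v ⬝ᵥ GdotPos G x v *ᵥ v) := by
  have hgrad : v ⬝ᵥ (fun i => pd i (fun x' => v ⬝ᵥ G x' v *ᵥ v) x)
      = v ⬝ᵥ GdotPos G x v *ᵥ v := by
    rw [dotProduct, ← fderiv_apply_eq_sum_pd, fderiv_dotProduct_mulVec hG]
    rfl
  have hxi : xiVec G x v = GdotPos G x v *ᵥ v
      - (1 / 2 : ℝ) • fun i => pd i (fun x' => v ⬝ᵥ G x' v *ᵥ v) x := by
    ext i
    simp [xiVec, GdotPos, mulVec, dotProduct, fderiv_apply_eq_sum_pd]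
  rw [hxi, dotProduct_sub, dotProduct_smul, hgrad, smul_eq_mul]
  ring

theorem hasDerivAt_kineticEnergy
    {G : (Fin d → ℝ) → (Fin d → ℝ) → Matrix (Fin d) (Fin d) ℝ} {x v : ℝ → Fin d → ℝ}
    {a : Fin d → ℝ} {t : ℝ}
    (hG : ∀ i j, DifferentiableAt ℝ (fun p : (Fin d → ℝ) × (Fin d → ℝ) => G p.1 p.2 i j)
      (x t, v t))
    (hsym : (G (x t) (v t)).IsSymm) (hx : HasDerivAt x (v t) t) (hv : HasDerivAt v a t) :
    HasDerivAt (fun s => (1 / 2) * (v s ⬝ᵥ G (x s) (v s) *ᵥ v s))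
      (v t ⬝ᵥ (G (x t) (v t) + XiMat G (x t) (v t)) *ᵥ a
        + (1 / 2) * (v t ⬝ᵥ GdotPos G (x t) (v t) *ᵥ v t)) t := by
  have hGt : ∀ i j, HasDerivAt (fun s => G (x s) (v s) i j)
      ((GdotPos G (x t) (v t) + GdotVel G (x t) (v t) a) i j) t := by
    intro i j
    have h := (hG i j).hasFDerivAt.comp_hasDerivAt t (hx.prodMk hv)
    exact h.congr_deriv (fderiv_uncurry_apply (f := fun x' v' => G x' v' i j) (hG i j) _ _)
  refine ((hv.dotProduct_mulVec hGt).const_mul (1 / 2)).congr_deriv ?_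
  rw [hsym.dotProduct_mulVec_comm a, add_mulVec, add_mulVec, dotProduct_add, dotProduct_add,
    dotProduct_GdotVel_mulVec]
  ring

end GDS

/-- Energy-dissipation identity for GDSs: along any solution of
`(G + Ξ_G) q̈ + ξ_G = −∇Φ − B q̇`, the total energy `V = (1/2)q̇ᵀGq̇ + Φ` satisfies
`dV/dt = −q̇ᵀ B q̇`. -/
theorem gds_energy_dissipation {d : ℕ}
    (G : (Fin d → ℝ) → (Fin d → ℝ) → Matrix (Fin d) (Fin d) ℝ)
    (B : (Fin d → ℝ) → (Fin d → ℝ) → Matrix (Fin d) (Fin d) ℝ)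
    (Φ : (Fin d → ℝ) → ℝ)
    (q : ℝ → (Fin d → ℝ))
    (hG : ∀ i j, Differentiable ℝ fun p : (Fin d → ℝ) × (Fin d → ℝ) => G p.1 p.2 i j)
    (hsym : ∀ x v i j, G x v i j = G x v j i)
    (hΦ : Differentiable ℝ Φ)
    (hq : ContDiff ℝ 2 q)
    (hode : ∀ t : ℝ,
      (G (q t) (deriv q t) + XiMat G (q t) (deriv q t)).mulVec (deriv (deriv q) t)
          + xiVec G (q t) (deriv q t)
        = (fun i => - pd i Φ (q t)) - (B (q t) (deriv q t)).mulVec (deriv q t)) :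
    ∀ t : ℝ,
      deriv (fun t' =>
          (1 / 2) * (deriv q t' ⬝ᵥ (G (q t') (deriv q t')).mulVec (deriv q t')) + Φ (q t')) t
        = -(deriv q t ⬝ᵥ (B (q t) (deriv q t)).mulVec (deriv q t)) := by
  intro t
  have hpos : HasDerivAt q (deriv q t) t := (hq.differentiable two_ne_zero t).hasDerivAt
  have hvel : HasDerivAt (deriv q) (deriv (deriv q) t) t :=
    (hq.differentiable_deriv_two t).hasDerivAt
  have hkin := hasDerivAt_kineticEnergy (fun i j => hG i j _)
    (IsSymm.ext fun i j => hsym _ _ j i) hpos hvel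
  have hpot : HasDerivAt (fun s => Φ (q s)) (fderiv ℝ Φ (q t) (deriv q t)) t :=
    (hΦ (q t)).hasFDerivAt.comp_hasDerivAt t hpos
  have hslice : ∀ i j, DifferentiableAt ℝ (fun x' => G x' (deriv q t) i j) (q t) := fun i j =>
    (hG i j _).comp (q t) (differentiableAt_id.prodMk (differentiableAt_const _))
  have hpower := congrArg (deriv q t ⬝ᵥ ·) (hode t)
  simp only [dotProduct_add, dotProduct_sub, dotProduct_xiVec hslice] at hpower
  rw [(hkin.fun_add hpot).deriv, fderiv_apply_eq_sum_pd, hpower]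
  simp only [dotProduct, mul_neg, Finset.sum_neg_distrib]
  ring
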